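/- Let bA ∈ M_{d,d'}(ℂ) be written in block-column form bA = [C_1 C_2 … C_p], where C_i has m_i columns. Then |bA|² = Σ_{i=1}^p U_i |C_i|² U_i* for some isometries U_i ∈ M_{d', m_i}(ℂ) (i.e. U_i* U_i = I_{m_i}). Consequently, for Schatten q-norms with q ≥ 2, ‖bA‖_q² ≤ Σ_i ‖C_i‖_q². -/

import Mathlib

open Matrix ComplexOrder

/-- Eigenvalues of a Hermitian matrix (junk value `0` otherwise). -/
noncomputable def herEigs {ι : Type*} [Fintype ι] [DecidableEq ι]
    (M : Matrix ι ι ℂ) : ι → ℝ :=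
  if h : M.IsHermitian then h.eigenvalues else 0

/-- The Schatten `q`-norm `‖X‖_q = (Tr |X|^q)^{1/q} = (Σ λᵢ(XᴴX)^{q/2})^{1/q}`. -/
noncomputable def schattenNorm {α β : Type*} [Fintype α] [Fintype β] [DecidableEq β]
    (q : ℝ) (X : Matrix α β ℂ) : ℝ :=
  (∑ j, herEigs (Xᴴ * X) j ^ (q / 2)) ^ (1 / q)

/-- The `i`-th column block of a matrix whose columns are partitioned into
blocks indexed by `Σ i, Fin (m i)`. -/
def colBlock {d p : ℕ} {m : Fin p → ℕ}
    (bA : Matrix (Fin d) ((i : Fin p) × Fin (m i)) ℂ) (i : Fin p) :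
    Matrix (Fin d) (Fin (m i)) ℂ :=
  Matrix.of fun r c => bA r ⟨i, c⟩

/-!
Write `S = |A| = (AᴴA)^{1/2}` and let `Eᵢ` be the coordinate isometry onto the `i`-th block of
columns, so that `Cᵢ = A Eᵢ` and `∑ᵢ Eᵢ Eᵢᴴ = 1`. The matrices `Xᵢ = S Eᵢ` satisfy
`XᵢᴴXᵢ = CᵢᴴCᵢ` and `∑ᵢ XᵢXᵢᴴ = S² = AᴴA`, and for any tall `X` the matrix `XXᴴ` is conjugate to
`XᴴX` by an isometry, since after padding `X` to a square matrix both have the same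
characteristic polynomial.

For the norm bound put `r = q/2 ≥ 1`. Diagonalising `AᴴA = V diag(μ) Vᴴ` and
`CᵢᴴCᵢ = Wᵢ diag(νᵢ) Wᵢᴴ` gives `μⱼ = ∑ᵢ ∑ₖ |Zᵢ(j,k)|² νᵢₖ` for the isometries `Zᵢ = VᴴUᵢWᵢ`.
The arrays `|Zᵢ(j,k)|²` are doubly substochastic, hence contract `ℓʳ` (weighted Hölder row by row),
and Minkowski's inequality gives `‖μ‖ᵣ ≤ ∑ᵢ ‖νᵢ‖ᵣ`, which is `‖A‖_q² ≤ ∑ᵢ ‖Cᵢ‖_q²`.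
-/

section Scalar

variable {ι κ : Type*} [Fintype κ] {r : ℝ}

lemma rpow_sum_mul_le_sum_mul_rpow (hr : 1 ≤ r) {w f : κ → ℝ} (hw : ∀ k, 0 ≤ w k)
    (hf : ∀ k, 0 ≤ f k) (hw1 : ∑ k, w k ≤ 1) :
    (∑ k, w k * f k) ^ r ≤ ∑ k, w k * f k ^ r := by
  have hsum : 0 ≤ ∑ k, w k * f k ^ r := Finset.sum_nonneg fun k _ => by
    have := hw k; have := hf k; positivity
  have hweight : (∑ k, w k) ^ (1 - r⁻¹) ≤ 1 :=
    Real.rpow_le_one (Finset.sum_nonneg fun k _ => hw k) hw1 (by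
      have := inv_le_one_of_one_le₀ hr; linarith)
  calc (∑ k, w k * f k) ^ r ≤ ((∑ k, w k * f k ^ r) ^ r⁻¹) ^ r := by
        gcongr
        · exact Finset.sum_nonneg fun k _ => mul_nonneg (hw k) (hf k)
        · exact (Real.inner_le_weight_mul_Lp_of_nonneg _ hr w f hw hf).trans
            (mul_le_of_le_one_left (by positivity) hweight)
    _ = ∑ k, w k * f k ^ r := Real.rpow_inv_rpow hsum (by linarith)

lemma sum_rpow_sum_mul_le_sum_rpow [Fintype ι] (hr : 1 ≤ r) {t : ι → κ → ℝ}
    (ht : ∀ j k, 0 ≤ t j k) (hrow : ∀ j, ∑ k, t j k ≤ 1) (hcol : ∀ k, ∑ j, t j k ≤ 1)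
    {ν : κ → ℝ} (hν : ∀ k, 0 ≤ ν k) :
    ∑ j, (∑ k, t j k * ν k) ^ r ≤ ∑ k, ν k ^ r :=
  calc ∑ j, (∑ k, t j k * ν k) ^ r ≤ ∑ j, ∑ k, t j k * ν k ^ r :=
        Finset.sum_le_sum fun j _ => rpow_sum_mul_le_sum_mul_rpow hr (ht j) hν (hrow j)
    _ = ∑ k, (∑ j, t j k) * ν k ^ r := by rw [Finset.sum_comm]; simp only [Finset.sum_mul]
    _ ≤ ∑ k, ν k ^ r := Finset.sum_le_sum fun k _ =>
        mul_le_of_le_one_left (Real.rpow_nonneg (hν k) r) (hcol k)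

lemma Lp_sum_le_sum_Lp (hr : 1 ≤ r) (s : Finset ι) {f : ι → κ → ℝ} (hf : ∀ i k, 0 ≤ f i k) :
    (∑ k, (∑ i ∈ s, f i k) ^ r) ^ (1 / r) ≤ ∑ i ∈ s, (∑ k, f i k ^ r) ^ (1 / r) := by
  classical
  induction s using Finset.induction_on with
  | empty =>
    simp [Real.zero_rpow (by linarith : r ≠ 0), Real.zero_rpow (inv_ne_zero (by linarith : r ≠ 0))]
  | insert i s hi ih =>
    simp only [Finset.sum_insert hi]
    exact (Real.Lp_add_le_of_nonneg _ hr (fun k _ => hf i k)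
      (fun k _ => Finset.sum_nonneg fun i _ => hf i k)).trans (add_le_add_right ih _)

end Scalar

lemma Lp_le_sum_Lp_of_eq_sum_mul {ι α : Type*} [Fintype ι] [Fintype α] {κ : α → Type*}
    [∀ i, Fintype (κ i)] {r : ℝ} (hr : 1 ≤ r) {t : ∀ i, ι → κ i → ℝ} (ht : ∀ i j k, 0 ≤ t i j k)
    (hrow : ∀ i j, ∑ k, t i j k ≤ 1) (hcol : ∀ i k, ∑ j, t i j k ≤ 1)
    {ν : ∀ i, κ i → ℝ} (hν : ∀ i k, 0 ≤ ν i k) {μ : ι → ℝ}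
    (hμ : ∀ j, μ j = ∑ i, ∑ k, t i j k * ν i k) :
    (∑ j, μ j ^ r) ^ (1 / r) ≤ ∑ i, (∑ k, ν i k ^ r) ^ (1 / r) := by
  simp only [hμ]
  refine (Lp_sum_le_sum_Lp hr _ fun i j =>
    Finset.sum_nonneg fun k _ => mul_nonneg (ht i j k) (hν i k)).trans
    (Finset.sum_le_sum fun i _ => ?_)
  gcongr
  · exact Finset.sum_nonneg fun j _ => Real.rpow_nonneg
      (Finset.sum_nonneg fun k _ => mul_nonneg (ht i j k) (hν i k)) _
  · exact sum_rpow_sum_mul_le_sum_rpow hr (ht i) (hrow i) (hcol i) (hν i)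

namespace Matrix

variable {𝕜 : Type*} [RCLike 𝕜] {ι κ : Type*}

lemma mul_conjTranspose_self_apply_self [Fintype κ] (Z : Matrix ι κ 𝕜) (j : ι) :
    (Z * Zᴴ) j j = ((∑ k, ‖Z j k‖ ^ 2 : ℝ) : 𝕜) := by
  simp [mul_apply, RCLike.mul_conj]

lemma mul_diagonal_mul_conjTranspose_apply_self [Fintype κ] [DecidableEq κ] (Z : Matrix ι κ 𝕜)
    (ν : κ → ℝ) (j : ι) :
    (Z * diagonal (fun k => (ν k : 𝕜)) * Zᴴ) j j = ((∑ k, ‖Z j k‖ ^ 2 * ν k : ℝ) : 𝕜) := by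
  rw [mul_apply]
  simp only [mul_diagonal, conjTranspose_apply, RCLike.star_def]
  push_cast
  refine Finset.sum_congr rfl fun k _ => ?_
  rw [mul_right_comm, RCLike.mul_conj]

lemma sum_norm_sq_apply_eq_one_of_isometry [Fintype ι] [DecidableEq κ] {Z : Matrix ι κ 𝕜}
    (hZ : Zᴴ * Z = 1) (k : κ) :
    ∑ j, ‖Z j k‖ ^ 2 = 1 := by
  have := mul_conjTranspose_self_apply_self Zᴴ k
  simp only [conjTranspose_conjTranspose, hZ, one_apply_eq, conjTranspose_apply, norm_star]
    at this
  exact_mod_cast this.symm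

lemma sum_norm_sq_apply_le_one_of_isometry [Fintype ι] [Fintype κ] [DecidableEq κ]
    {Z : Matrix ι κ 𝕜} (hZ : Zᴴ * Z = 1) (j : ι) :
    ∑ k, ‖Z j k‖ ^ 2 ≤ 1 := by
  classical
  have hproj : (1 - Z * Zᴴ)ᴴ * (1 - Z * Zᴴ) = 1 - Z * Zᴴ := by
    simp only [conjTranspose_sub, conjTranspose_one, conjTranspose_mul,
      conjTranspose_conjTranspose, sub_mul, mul_sub, one_mul, mul_one, Matrix.mul_assoc]
    rw [← Matrix.mul_assoc Zᴴ Z, hZ, Matrix.one_mul]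
    abel
  have := (hproj ▸ posSemidef_conjTranspose_mul_self (1 - Z * Zᴴ)).diag_nonneg (i := j)
  rw [Matrix.sub_apply, one_apply_eq, mul_conjTranspose_self_apply_self, sub_nonneg] at this
  exact_mod_cast this

lemma exists_isometry_of_card_le [Fintype ι] [Fintype κ] [DecidableEq κ]
    (h : Fintype.card κ ≤ Fintype.card ι) :
    ∃ J : Matrix ι κ 𝕜, Jᴴ * J = 1 := by
  classical
  obtain ⟨ψ⟩ := Function.Embedding.nonempty_of_card_le h
  refine ⟨(1 : Matrix ι ι 𝕜).submatrix id ψ, ?_⟩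
  ext a b
  simp [mul_apply, one_apply, ψ.injective.eq_iff]

namespace IsHermitian

variable [Fintype ι] [DecidableEq ι] {A B : Matrix ι ι 𝕜}

lemma conjTranspose_eigenvectorUnitary_mul_self (hA : A.IsHermitian) :
    (hA.eigenvectorUnitary : Matrix ι ι 𝕜)ᴴ * hA.eigenvectorUnitary = 1 :=
  Unitary.coe_star_mul_self _

lemma eigenvectorUnitary_mul_conjTranspose_self (hA : A.IsHermitian) :
    (hA.eigenvectorUnitary : Matrix ι ι 𝕜) * (hA.eigenvectorUnitary : Matrix ι ι 𝕜)ᴴ = 1 :=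
  Unitary.coe_mul_star_self _

lemma conjTranspose_eigenvectorUnitary_mul_mul (hA : A.IsHermitian) :
    (hA.eigenvectorUnitary : Matrix ι ι 𝕜)ᴴ * A * hA.eigenvectorUnitary =
      diagonal (fun j => (hA.eigenvalues j : 𝕜)) := by
  simpa [Function.comp_def, star_eq_conjTranspose] using
    hA.conjStarAlgAut_star_eigenvectorUnitary

lemma eq_eigenvectorUnitary_mul_mul_conjTranspose (hA : A.IsHermitian) :
    A = hA.eigenvectorUnitary * diagonal (fun j => (hA.eigenvalues j : 𝕜)) *
      (hA.eigenvectorUnitary : Matrix ι ι 𝕜)ᴴ := by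
  simpa [Function.comp_def, star_eq_conjTranspose] using hA.spectral_theorem

lemma exists_unitary_conj_eq_of_charpoly_eq (hA : A.IsHermitian) (hB : B.IsHermitian)
    (h : A.charpoly = B.charpoly) :
    ∃ Q : Matrix ι ι 𝕜, Qᴴ * Q = 1 ∧ A = Q * B * Qᴴ := by
  set VA : Matrix ι ι 𝕜 := (hA.eigenvectorUnitary : Matrix ι ι 𝕜)
  set VB : Matrix ι ι 𝕜 := (hB.eigenvectorUnitary : Matrix ι ι 𝕜)
  refine ⟨VA * VBᴴ, ?_, ?_⟩
  · rw [conjTranspose_mul, conjTranspose_conjTranspose, Matrix.mul_assoc, ← Matrix.mul_assoc VAᴴ,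
      hA.conjTranspose_eigenvectorUnitary_mul_self, Matrix.one_mul,
      hB.eigenvectorUnitary_mul_conjTranspose_self]
  · conv_lhs => rw [hA.eq_eigenvectorUnitary_mul_mul_conjTranspose,
      (hA.eigenvalues_eq_eigenvalues_iff hB).2 h]
    conv_rhs => rw [hB.eq_eigenvectorUnitary_mul_mul_conjTranspose]
    simp only [conjTranspose_mul, conjTranspose_conjTranspose, Matrix.mul_assoc]
    rw [← Matrix.mul_assoc VBᴴ VB, hB.conjTranspose_eigenvectorUnitary_mul_self, Matrix.one_mul,
      ← Matrix.mul_assoc VBᴴ VB, hB.conjTranspose_eigenvectorUnitary_mul_self, Matrix.one_mul]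

end IsHermitian

lemma exists_isometry_mul_conjTranspose_self_eq [Fintype ι] [Fintype κ] [DecidableEq κ]
    (h : Fintype.card κ ≤ Fintype.card ι) (X : Matrix ι κ 𝕜) :
    ∃ U : Matrix ι κ 𝕜, Uᴴ * U = 1 ∧ X * Xᴴ = U * (Xᴴ * X) * Uᴴ := by
  classical
  obtain ⟨J, hJ⟩ := exists_isometry_of_card_le (𝕜 := 𝕜) h
  set Y := X * Jᴴ
  obtain ⟨Q, hQ, hYQ⟩ :=
    (isHermitian_mul_conjTranspose_self Y).exists_unitary_conj_eq_of_charpoly_eq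
      (isHermitian_conjTranspose_mul_self Y) (charpoly_mul_comm _ _)
  refine ⟨Q * J, ?_, ?_⟩
  · rw [conjTranspose_mul, Matrix.mul_assoc, ← Matrix.mul_assoc Qᴴ, hQ, Matrix.one_mul, hJ]
  · have hYY : Y * Yᴴ = X * Xᴴ := by
      simp only [Y, conjTranspose_mul, conjTranspose_conjTranspose, Matrix.mul_assoc]
      rw [← Matrix.mul_assoc Jᴴ J, hJ, Matrix.one_mul]
    rw [← hYY, hYQ]
    simp only [Y, conjTranspose_mul, conjTranspose_conjTranspose, Matrix.mul_assoc]

section ColumnBlocks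

variable {α : Type*} [Fintype α] {κ : α → Type*} [∀ i, Fintype (κ i)] [∀ i, DecidableEq (κ i)]

lemma sum_submatrix_one_sigmaMk_mul_conjTranspose [DecidableEq α] :
    ∑ i, (1 : Matrix (Σ i, κ i) (Σ i, κ i) 𝕜).submatrix id (Sigma.mk i) *
      ((1 : Matrix (Σ i, κ i) (Σ i, κ i) 𝕜).submatrix id (Sigma.mk i))ᴴ = 1 := by
  ext s t
  simp only [sum_apply, mul_apply, conjTranspose_apply, submatrix_apply, id, one_apply]
  rw [← Fintype.sum_sigma (fun x => (if s = x then 1 else 0) * star (if t = x then (1 : 𝕜) else 0))]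
  simp

open scoped MatrixOrder in
theorem exists_isometries_conjTranspose_mul_self_eq_sum [Fintype ι] (A : Matrix ι (Σ i, κ i) 𝕜) :
    ∃ U : ∀ i, Matrix (Σ i, κ i) (κ i) 𝕜, (∀ i, (U i)ᴴ * U i = 1) ∧
      Aᴴ * A = ∑ i, U i * ((A.submatrix id (Sigma.mk i))ᴴ * A.submatrix id (Sigma.mk i)) *
        (U i)ᴴ := by
  classical
  set E : ∀ i, Matrix (Σ i, κ i) (κ i) 𝕜 := fun i => (1 : Matrix _ _ 𝕜).submatrix id (Sigma.mk i)
  set S := CFC.sqrt (Aᴴ * A)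
  have hS : Sᴴ = S := (CFC.sqrt_nonneg _).posSemidef.1
  have hSS : S * S = Aᴴ * A :=
    CFC.sqrt_mul_sqrt_self _ (posSemidef_conjTranspose_mul_self A).nonneg
  have hAE : ∀ i, A * E i = A.submatrix id (Sigma.mk i) := fun i => by
    simpa using mul_submatrix_one (Equiv.refl _) (Sigma.mk i) A
  have hcard : ∀ i, Fintype.card (κ i) ≤ Fintype.card (Σ i, κ i) := fun i =>
    Fintype.card_le_of_injective _ sigma_mk_injective
  choose U hU hUX using fun i => exists_isometry_mul_conjTranspose_self_eq (hcard i) (S * E i)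
  refine ⟨U, hU, ?_⟩
  calc Aᴴ * A = S * (∑ i, E i * (E i)ᴴ) * S := by
        rw [sum_submatrix_one_sigmaMk_mul_conjTranspose, Matrix.mul_one, hSS]
    _ = ∑ i, (S * E i) * (S * E i)ᴴ := by
        simp only [Finset.mul_sum, Finset.sum_mul, conjTranspose_mul, hS, Matrix.mul_assoc]
    _ = _ := by
        refine Finset.sum_congr rfl fun i _ => ?_
        rw [hUX i, ← hAE i, conjTranspose_mul, conjTranspose_mul, hS]
        simp only [Matrix.mul_assoc]
        rw [← Matrix.mul_assoc S S, hSS, Matrix.mul_assoc]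

end ColumnBlocks

theorem IsHermitian.exists_isometries_eigenvalues_eq_sum [Fintype ι] [DecidableEq ι] {α : Type*}
    [Fintype α] {κ : α → Type*} [∀ i, Fintype (κ i)] [∀ i, DecidableEq (κ i)]
    {M : Matrix ι ι 𝕜} (hM : M.IsHermitian) {N : ∀ i, Matrix (κ i) (κ i) 𝕜}
    (hN : ∀ i, (N i).IsHermitian) {U : ∀ i, Matrix ι (κ i) 𝕜} (hU : ∀ i, (U i)ᴴ * U i = 1)
    (hsum : M = ∑ i, U i * N i * (U i)ᴴ) :
    ∃ Z : ∀ i, Matrix ι (κ i) 𝕜, (∀ i, (Z i)ᴴ * Z i = 1) ∧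
      ∀ j, hM.eigenvalues j = ∑ i, ∑ k, ‖Z i j k‖ ^ 2 * (hN i).eigenvalues k := by
  set V : Matrix ι ι 𝕜 := (hM.eigenvectorUnitary : Matrix ι ι 𝕜)
  set μ := hM.eigenvalues
  have hMV : Vᴴ * M * V = diagonal (fun j => (μ j : 𝕜)) :=
    hM.conjTranspose_eigenvectorUnitary_mul_mul
  have hV : V * Vᴴ = 1 := hM.eigenvectorUnitary_mul_conjTranspose_self
  clear_value V μ
  set W : ∀ i, Matrix (κ i) (κ i) 𝕜 := fun i => ((hN i).eigenvectorUnitary : Matrix (κ i) (κ i) 𝕜)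
  refine ⟨fun i => Vᴴ * U i * W i, fun i => ?_, fun j => ?_⟩
  · simp only [conjTranspose_mul, conjTranspose_conjTranspose, Matrix.mul_assoc]
    rw [← Matrix.mul_assoc V, hV, Matrix.one_mul, ← Matrix.mul_assoc (U i)ᴴ, hU i, Matrix.one_mul,
      (hN i).conjTranspose_eigenvectorUnitary_mul_self]
  · have hdiag : diagonal (fun j => (μ j : 𝕜)) = ∑ i, (Vᴴ * U i * W i) *
        diagonal (fun k => ((hN i).eigenvalues k : 𝕜)) * (Vᴴ * U i * W i)ᴴ := by
      rw [← hMV, hsum, Finset.mul_sum, Finset.sum_mul]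
      refine Finset.sum_congr rfl fun i _ => ?_
      conv_lhs => rw [(hN i).eq_eigenvectorUnitary_mul_mul_conjTranspose]
      simp only [W, conjTranspose_mul, conjTranspose_conjTranspose, Matrix.mul_assoc]
    have := congrFun (congrFun hdiag j) j
    simp only [diagonal_apply_eq, sum_apply, mul_diagonal_mul_conjTranspose_apply_self] at this
    exact_mod_cast this

theorem PosSemidef.Lp_eigenvalues_le_sum_of_eq_sum_conj [Fintype ι] [DecidableEq ι] {α : Type*}
    [Fintype α] {κ : α → Type*} [∀ i, Fintype (κ i)] [∀ i, DecidableEq (κ i)]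
    {M : Matrix ι ι 𝕜} (hM : M.PosSemidef) {N : ∀ i, Matrix (κ i) (κ i) 𝕜}
    (hN : ∀ i, (N i).PosSemidef) {U : ∀ i, Matrix ι (κ i) 𝕜} (hU : ∀ i, (U i)ᴴ * U i = 1)
    (hsum : M = ∑ i, U i * N i * (U i)ᴴ) {r : ℝ} (hr : 1 ≤ r) :
    (∑ j, hM.1.eigenvalues j ^ r) ^ (1 / r) ≤
      ∑ i, (∑ k, (hN i).1.eigenvalues k ^ r) ^ (1 / r) := by
  obtain ⟨Z, hZ, hμ⟩ := hM.1.exists_isometries_eigenvalues_eq_sum (fun i => (hN i).1) hU hsum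
  exact Lp_le_sum_Lp_of_eq_sum_mul hr (fun i j k => sq_nonneg ‖Z i j k‖)
    (fun i => sum_norm_sq_apply_le_one_of_isometry (hZ i))
    (fun i k => (sum_norm_sq_apply_eq_one_of_isometry (hZ i) k).le)
    (fun i => (hN i).eigenvalues_nonneg) hμ

end Matrix

lemma herEigs_eq_eigenvalues {ι : Type*} [Fintype ι] [DecidableEq ι] {M : Matrix ι ι ℂ}
    (hM : M.IsHermitian) : herEigs M = hM.eigenvalues :=
  dif_pos hM

lemma schattenNorm_sq {α β : Type*} [Fintype α] [Fintype β] [DecidableEq β] (q : ℝ)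
    (X : Matrix α β ℂ) :
    schattenNorm q X ^ 2 = (∑ j, (isHermitian_conjTranspose_mul_self X).eigenvalues j ^ (q / 2))
      ^ (1 / (q / 2)) := by
  have hsum : 0 ≤ ∑ j, (isHermitian_conjTranspose_mul_self X).eigenvalues j ^ (q / 2) :=
    Finset.sum_nonneg fun j _ =>
      Real.rpow_nonneg ((posSemidef_conjTranspose_mul_self X).eigenvalues_nonneg j) _
  rw [schattenNorm, herEigs_eq_eigenvalues (isHermitian_conjTranspose_mul_self X),
    ← Real.rpow_natCast, ← Real.rpow_mul hsum]
  congr 1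
  push_cast
  ring

/-- **A Pythagorean theorem for column partitions (Bourin–Lee).** If
`bA = [C_1 … C_p]` is partitioned into column blocks, then
`|bA|² = Σᵢ Uᵢ |Cᵢ|² Uᵢ*` for some isometries `Uᵢ`; consequently for every
Schatten `q`-norm with `q ≥ 2`, `‖bA‖_q² ≤ Σᵢ ‖Cᵢ‖_q²`. -/
theorem pythagoras_column_blocks {d p : ℕ} {m : Fin p → ℕ}
    (bA : Matrix (Fin d) ((i : Fin p) × Fin (m i)) ℂ) :
    (∃ U : (i : Fin p) → Matrix ((i : Fin p) × Fin (m i)) (Fin (m i)) ℂ,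
      (∀ i, (U i)ᴴ * U i = 1) ∧
      bAᴴ * bA = ∑ i, U i * ((colBlock bA i)ᴴ * colBlock bA i) * (U i)ᴴ) ∧
    ∀ q : ℝ, 2 ≤ q →
      schattenNorm q bA ^ 2 ≤ ∑ i, schattenNorm q (colBlock bA i) ^ 2 := by
  obtain ⟨U, hU, hsum⟩ := exists_isometries_conjTranspose_mul_self_eq_sum bA
  refine ⟨⟨U, hU, hsum⟩, fun q hq => ?_⟩
  simp only [schattenNorm_sq]
  exact (posSemidef_conjTranspose_mul_self bA).Lp_eigenvalues_le_sum_of_eq_sum_conj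
    (fun i => posSemidef_conjTranspose_mul_self (colBlock bA i)) hU hsum (by linarith)
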